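/- arXiv:1609.03701 — 2 statements merged into one kernel-verified Lean document; each statement's English description precedes it below -/
import Mathlib

section
/- For a domain Ω ⊆ ℝ³ containing a point V and any degree k ≥ 0, the image of the vector polynomial space [Π^k(Ω)]³ under the Koszul map κ(q) = (x − V) × q equals the image under κ of the subspace of divergence-free vector polynomials of degree k. That is, {(x−V) × q₁ : q₁ ∈ [Π^k]³} = {(x−V) × q₂ : q₂ ∈ [Π^k]³, div q₂ = 0}. -/
/-!
Since `(x - V) × ((x - V) p) = 0`, replacing `q` by `q + (x - V) p` does not change its image
under the Koszul map, so it suffices to find `p` with `(x - V) p` of degree `≤ k` and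
`div ((x - V) p) = - div q`. After translating `V` to the origin, Euler's identity shows that
`p ↦ div (x p)` multiplies a homogeneous polynomial of degree `d` by `n + d` (here `n = 3`), so
`p` is obtained by dividing each homogeneous component of `- div q` by `n + d`.
-/

open MvPolynomial

namespace MvPolynomial

variable {σ R : Type*}

section CommSemiring

variable [CommSemiring R]

noncomputable def translate (c : σ → R) : MvPolynomial σ R →ₐ[R] MvPolynomial σ R :=
  aeval fun j => X j + C (c j)

@[simp]
theorem translate_X (c : σ → R) (j : σ) : translate c (X j) = X j + C (c j) :=
  aeval_X _ _

theorem pderiv_translate (c : σ → R) (i : σ) (p : MvPolynomial σ R) :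
    pderiv i (translate c p) = translate c (pderiv i p) := by
  induction p using MvPolynomial.induction_on with
  | C a => simp [translate]
  | add p q hp hq => simp only [map_add, hp, hq]
  | mul_X p j hp =>
    classical
    simp only [map_mul, pderiv_mul, map_add, hp, translate_X, pderiv_X, pderiv_C, add_zero]
    rcases eq_or_ne j i with rfl | hji <;> simp [*]

theorem totalDegree_translate_le (c : σ → R) (p : MvPolynomial σ R) :
    (translate c p).totalDegree ≤ p.totalDegree := by
  conv_lhs => rw [p.as_sum, map_sum]
  refine totalDegree_finsetSum_le fun e he => ?_
  rw [translate, aeval_monomial, ← C_eq_algebraMap]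
  refine (totalDegree_mul _ _).trans ?_
  rw [totalDegree_C, zero_add]
  refine (totalDegree_finsetProd _ _).trans ((Finset.sum_le_sum fun j _ => ?_).trans
    (le_totalDegree he))
  refine (totalDegree_pow _ _).trans (mul_le_of_le_one_right' ?_)
  refine (totalDegree_add _ _).trans (max_le ?_ ((totalDegree_C _).trans_le zero_le_one))
  exact (totalDegree_monomial_le _ _).trans (by simp)

theorem totalDegree_pderiv_le (i : σ) (f : MvPolynomial σ R) :
    (pderiv i f).totalDegree ≤ f.totalDegree - 1 := by
  conv_lhs => rw [← sum_homogeneousComponent f, map_sum]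
  refine totalDegree_finsetSum_le fun d hd => ?_
  refine (homogeneousComponent_isHomogeneous d f).pderiv.totalDegree_le.trans ?_
  have := Finset.mem_range.1 hd
  omega

theorem sum_pderiv_X_mul [Fintype σ] (p : MvPolynomial σ R) :
    ∑ i, pderiv i (X i * p) = Fintype.card σ • p + ∑ i, X i * pderiv i p := by
  simp only [pderiv_mul, pderiv_X_self, one_mul, Finset.sum_add_distrib, Finset.sum_const,
    Finset.card_univ]

theorem IsHomogeneous.sum_pderiv_X_mul [Fintype σ] {p : MvPolynomial σ R} {n : ℕ}
    (hp : p.IsHomogeneous n) : ∑ i, pderiv i (X i * p) = (Fintype.card σ + n) • p := by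
  rw [MvPolynomial.sum_pderiv_X_mul, hp.sum_X_mul_pderiv, add_smul]

end CommSemiring

theorem translate_neg_translate [CommRing R] (c : σ → R) (p : MvPolynomial σ R) :
    translate (-c) (translate c p) = p := by
  rw [← AlgHom.comp_apply, show (translate (-c)).comp (translate c) = AlgHom.id R _ from
    algHom_ext fun j => by simp, AlgHom.id_apply]

section Field

variable [Fintype σ] {K : Type*} [Field K] [CharZero K] [Nonempty σ]

theorem exists_sum_pderiv_X_mul_eq (s : MvPolynomial σ K) :
    ∃ p : MvPolynomial σ K, p.totalDegree ≤ s.totalDegree ∧ ∑ i, pderiv i (X i * p) = s := by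
  refine ⟨∑ d ∈ Finset.range (s.totalDegree + 1),
    ((Fintype.card σ + d : ℕ) : K)⁻¹ • homogeneousComponent d s, ?_, ?_⟩
  · refine totalDegree_finsetSum_le fun d hd => (totalDegree_smul_le _ _).trans ?_
    exact (homogeneousComponent_isHomogeneous d s).totalDegree_le.trans
      (Nat.lt_succ_iff.1 (Finset.mem_range.1 hd))
  · simp only [map_sum, Finset.mul_sum, mul_smul_comm, Derivation.map_smul]
    rw [Finset.sum_comm]
    conv_rhs => rw [← sum_homogeneousComponent s]
    refine Finset.sum_congr rfl fun d _ => ?_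
    rw [← Finset.smul_sum, (homogeneousComponent_isHomogeneous d s).sum_pderiv_X_mul,
      ← Nat.cast_smul_eq_nsmul K, inv_smul_smul₀ (Nat.cast_ne_zero.2 (by positivity))]

theorem exists_sum_pderiv_X_sub_C_mul_eq (c : σ → K) (s : MvPolynomial σ K) :
    ∃ p : MvPolynomial σ K, p.totalDegree ≤ s.totalDegree ∧
      ∑ i, pderiv i ((X i - C (c i)) * p) = s := by
  obtain ⟨p, hdeg, hp⟩ := exists_sum_pderiv_X_mul_eq (translate c s)
  refine ⟨translate (-c) p,
    (totalDegree_translate_le _ _).trans (hdeg.trans (totalDegree_translate_le _ _)), ?_⟩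
  have hX : ∀ i, (X i - C (c i)) * translate (-c) p = translate (-c) (X i * p) := by
    simp [sub_eq_add_neg]
  simp only [hX, pderiv_translate, ← map_sum, hp, translate_neg_translate]

theorem exists_sum_pderiv_add_X_sub_C_mul_eq_zero (c : σ → K) {k : ℕ}
    {q : σ → MvPolynomial σ K} (hq : ∀ i, (q i).totalDegree ≤ k) :
    ∃ p : MvPolynomial σ K, (∀ i, (q i + (X i - C (c i)) * p).totalDegree ≤ k) ∧
      ∑ i, pderiv i (q i + (X i - C (c i)) * p) = 0 := by
  cases k with
  | zero =>
    have hconst : ∀ i, pderiv i (q i) = 0 := fun i => by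
      rw [totalDegree_eq_zero_iff_eq_C.1 (Nat.le_zero.1 (hq i)), pderiv_C]
    exact ⟨0, by simpa using hq, by simp [hconst]⟩
  | succ m =>
    obtain ⟨p, hp, hdiv⟩ := exists_sum_pderiv_X_sub_C_mul_eq c (-∑ i, pderiv i (q i))
    have hdeg_div : (∑ i, pderiv i (q i)).totalDegree ≤ m :=
      totalDegree_finsetSum_le fun i _ =>
        (totalDegree_pderiv_le i (q i)).trans (Nat.sub_le_of_le_add (hq i))
    refine ⟨p, fun i => (totalDegree_add _ _).trans (max_le (hq i) ?_), ?_⟩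
    · refine (totalDegree_mul _ _).trans ?_
      have := (totalDegree_sub_C_le (X i : MvPolynomial σ K) (c i)).trans (totalDegree_X i).le
      rw [totalDegree_neg] at hp
      omega
    · rw [Finset.sum_congr rfl fun i _ => map_add (pderiv i) _ _, Finset.sum_add_distrib, hdiv,
        add_neg_cancel]

end Field

end MvPolynomial

theorem crossProduct_sub_eval_add_X_sub_C_mul {R : Type*} [CommRing R] (V x : Fin 3 → R)
    (q : Fin 3 → MvPolynomial (Fin 3) R) (p : MvPolynomial (Fin 3) R) :
    crossProduct (x - V) (fun i => eval x (q i + (X i - C (V i)) * p)) =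
      crossProduct (x - V) (fun i => eval x (q i)) := by
  have hsplit : (fun i => eval x (q i + (X i - C (V i)) * p)) =
      (fun i => eval x (q i)) + eval x p • (x - V) := by
    ext i
    simp only [map_add, map_mul, map_sub, eval_X, eval_C, Pi.add_apply, Pi.smul_apply,
      Pi.sub_apply, smul_eq_mul]
    ring
  rw [hsplit, map_add, map_smul, cross_self, smul_zero, add_zero]

theorem stmt_0_general (Ω : Set (Fin 3 → ℝ)) (V : Fin 3 → ℝ) (k : ℕ) :
    {f : (Fin 3 → ℝ) → (Fin 3 → ℝ) |
      ∃ q : Fin 3 → MvPolynomial (Fin 3) ℝ, (∀ i, (q i).totalDegree ≤ k) ∧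
        ∀ x ∈ Ω, f x = crossProduct (x - V) (fun i => eval x (q i))} =
    {f : (Fin 3 → ℝ) → (Fin 3 → ℝ) |
      ∃ q : Fin 3 → MvPolynomial (Fin 3) ℝ, (∀ i, (q i).totalDegree ≤ k) ∧
        (∑ i, pderiv i (q i)) = 0 ∧
        ∀ x ∈ Ω, f x = crossProduct (x - V) (fun i => eval x (q i))} := by
  ext f
  refine ⟨fun ⟨q, hdeg, hf⟩ => ?_, fun ⟨q, hdeg, _, hf⟩ => ⟨q, hdeg, hf⟩⟩
  obtain ⟨p, hdeg', hdiv⟩ := exists_sum_pderiv_add_X_sub_C_mul_eq_zero V hdeg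
  refine ⟨fun i => q i + (X i - C (V i)) * p, hdeg', hdiv, fun x hx => ?_⟩
  rw [hf x hx, crossProduct_sub_eval_add_X_sub_C_mul]

/-- the image of `[Π^k(Ω)]³` under the Koszul map `q ↦ (x−V) × q`
equals the image of the subspace of divergence-free vector polynomials of degree ≤ k. -/
theorem stmt_0 (Ω : Set (Fin 3 → ℝ)) (hΩ : IsOpen Ω) (V : Fin 3 → ℝ) (hV : V ∈ Ω) (k : ℕ) :
    {f : (Fin 3 → ℝ) → (Fin 3 → ℝ) |
      ∃ q : Fin 3 → MvPolynomial (Fin 3) ℝ, (∀ i, (q i).totalDegree ≤ k) ∧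
        ∀ x ∈ Ω, f x = crossProduct (x - V) (fun i => eval x (q i))} =
    {f : (Fin 3 → ℝ) → (Fin 3 → ℝ) |
      ∃ q : Fin 3 → MvPolynomial (Fin 3) ℝ, (∀ i, (q i).totalDegree ≤ k) ∧
        (∑ i, pderiv i (q i)) = 0 ∧
        ∀ x ∈ Ω, f x = crossProduct (x - V) (fun i => eval x (q i))} :=
  stmt_0_general Ω V k
end

section
/- Let V, Q be Hilbert spaces, a : V × V → ℝ a bounded bilinear form, and b : V × Q → ℝ a bounded bilinear form satisfying an inf-sup condition with constant β > 0. Let V⁰ = {v ∈ V : b(v,q) = 0 for all q ∈ Q}, and suppose u ∈ V⁰ and u_h ∈ V⁰_h for a closed subspace pair (V_h, Q_h) with discrete Fortin operator I_F : V → V_h satisfying b(I_F v, q_h) = b(v, q_h) for all q_h ∈ Q_h and ‖I_F v‖ ≤ C_F ‖v‖. Then for every v ∈ V⁰, inf_{v_h ∈ V⁰_h} ‖v − v_h‖ ≤ (1 + C_F) inf_{w_h ∈ V_h} ‖v − w_h‖, where V⁰_h = {v_h ∈ V_h : b(v_h, q_h) = 0 for all q_h ∈ Q_h}. -/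
/-!
Any `w ∈ Vh` is corrected into the discrete kernel by `w + I_F (v - w)`: the Fortin property
gives `b (w + I_F (v - w)) q_h = b v q_h = 0`, and `‖v - w - I_F (v - w)‖ ≤ (1 + C_F) ‖v - w‖`.
-/

lemma Real.sInf_le_mul_sInf_of_forall_exists_le {S T : Set ℝ} {c : ℝ} (hc : 0 ≤ c)
    (hS : BddBelow S) (hT : T.Nonempty) (h : ∀ t ∈ T, ∃ s ∈ S, s ≤ c * t) :
    sInf S ≤ c * sInf T := by
  rw [← smul_eq_mul, ← Real.sInf_smul_of_nonneg hc]
  refine le_csInf (hT.smul_set) ?_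
  rintro _ ⟨t, ht, rfl⟩
  obtain ⟨s, hs, hst⟩ := h t ht
  exact (csInf_le hS hs).trans hst

section FortinCorrection

variable {V Q : Type*} [SeminormedAddCommGroup V] [Module ℝ V] [AddCommGroup Q] [Module ℝ Q]

lemma fortin_correction_mem_and_b_eq_zero (b : V →ₗ[ℝ] Q →ₗ[ℝ] ℝ)
    {Vh : Submodule ℝ V} {Qh : Submodule ℝ Q} {IF : V →ₗ[ℝ] V}
    (hIFmem : ∀ v : V, IF v ∈ Vh) (hIFb : ∀ v : V, ∀ qh ∈ Qh, b (IF v) qh = b v qh)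
    {v w : V} (hv : ∀ qh ∈ Qh, b v qh = 0) (hw : w ∈ Vh) :
    w + IF (v - w) ∈ Vh ∧ ∀ qh ∈ Qh, b (w + IF (v - w)) qh = 0 := by
  refine ⟨Vh.add_mem hw (hIFmem _), fun qh hqh => ?_⟩
  rw [map_add, LinearMap.add_apply, hIFb _ qh hqh, ← LinearMap.add_apply, ← map_add,
    add_sub_cancel, hv qh hqh]

lemma norm_sub_fortin_correction_le {IF : V →ₗ[ℝ] V} {CF : ℝ}
    (hIFnorm : ∀ v : V, ‖IF v‖ ≤ CF * ‖v‖) (v w : V) :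
    ‖v - (w + IF (v - w))‖ ≤ (1 + CF) * ‖v - w‖ :=
  calc ‖v - (w + IF (v - w))‖ = ‖(v - w) - IF (v - w)‖ := by rw [sub_add_eq_sub_sub]
    _ ≤ ‖v - w‖ + ‖IF (v - w)‖ := norm_sub_le _ _
    _ ≤ (1 + CF) * ‖v - w‖ := by linarith [hIFnorm (v - w)]

end FortinCorrection

theorem stmt_6_general {V Q : Type*}
    [NormedAddCommGroup V] [InnerProductSpace ℝ V]
    [NormedAddCommGroup Q] [InnerProductSpace ℝ Q]
    (b : V →ₗ[ℝ] Q →ₗ[ℝ] ℝ)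
    (Vh : Submodule ℝ V) (Qh : Submodule ℝ Q)
    (IF : V →ₗ[ℝ] V) (CF : ℝ) (hCF : 0 ≤ CF)
    (hIFmem : ∀ v : V, IF v ∈ Vh)
    (hIFb : ∀ v : V, ∀ qh ∈ Qh, b (IF v) qh = b v qh)
    (hIFnorm : ∀ v : V, ‖IF v‖ ≤ CF * ‖v‖)
    (v : V) (hv : ∀ q : Q, b v q = 0) :
    sInf {r : ℝ | ∃ vh ∈ Vh, (∀ qh ∈ Qh, b vh qh = 0) ∧ r = ‖v - vh‖} ≤
      (1 + CF) * sInf {r : ℝ | ∃ wh ∈ Vh, r = ‖v - wh‖} := by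
  refine Real.sInf_le_mul_sInf_of_forall_exists_le (by linarith) ⟨0, ?_⟩
    ⟨_, 0, Vh.zero_mem, rfl⟩ ?_
  · rintro _ ⟨_, _, _, rfl⟩
    positivity
  · rintro _ ⟨w, hw, rfl⟩
    obtain ⟨hmem, hker⟩ :=
      fortin_correction_mem_and_b_eq_zero b hIFmem hIFb (fun q _ => hv q) hw
    exact ⟨_, ⟨_, hmem, hker, rfl⟩, norm_sub_fortin_correction_le hIFnorm v w⟩

/-- best approximation from the discretely divergence-free subspace is
comparable to the best approximation from the full discrete space (Fortin operator). -/
theorem stmt_6 {V Q : Type*}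
    [NormedAddCommGroup V] [InnerProductSpace ℝ V] [CompleteSpace V]
    [NormedAddCommGroup Q] [InnerProductSpace ℝ Q] [CompleteSpace Q]
    (a : V →ₗ[ℝ] V →ₗ[ℝ] ℝ) (Ca : ℝ) (ha : ∀ u v : V, |a u v| ≤ Ca * ‖u‖ * ‖v‖)
    (b : V →ₗ[ℝ] Q →ₗ[ℝ] ℝ) (Cb : ℝ) (hbbd : ∀ (v : V) (q : Q), |b v q| ≤ Cb * ‖v‖ * ‖q‖)
    (β : ℝ) (hβ : 0 < β)
    (hinfsup : ∀ q : Q, ∃ v : V, v ≠ 0 ∧ β * ‖q‖ * ‖v‖ ≤ b v q)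
    (Vh : Submodule ℝ V) (Qh : Submodule ℝ Q)
    (hVh : IsClosed (Vh : Set V)) (hQh : IsClosed (Qh : Set Q))
    (IF : V →ₗ[ℝ] V) (CF : ℝ) (hCF : 0 ≤ CF)
    (hIFmem : ∀ v : V, IF v ∈ Vh)
    (hIFb : ∀ v : V, ∀ qh ∈ Qh, b (IF v) qh = b v qh)
    (hIFnorm : ∀ v : V, ‖IF v‖ ≤ CF * ‖v‖)
    (u : V) (hu : ∀ q : Q, b u q = 0)
    (uh : V) (huh : uh ∈ Vh ∧ ∀ qh ∈ Qh, b uh qh = 0)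
    (v : V) (hv : ∀ q : Q, b v q = 0) :
    sInf {r : ℝ | ∃ vh ∈ Vh, (∀ qh ∈ Qh, b vh qh = 0) ∧ r = ‖v - vh‖} ≤
      (1 + CF) * sInf {r : ℝ | ∃ wh ∈ Vh, r = ‖v - wh‖} :=
  stmt_6_general b Vh Qh IF CF hCF hIFmem hIFb hIFnorm v hv
end
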